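/- Let m ≠ 0 and λ ≠ 0 be real constants. Consider on ℝ³ with coordinates (τ,x,y) the metric ĝ = diag(−e^{mλτ+2x}, e^{mλτ+2x}, e^{m(λ−1)τ+2x}). Then the vector field Y₃ − (1/λ)Y₇, with components (−2/(mλ), 1, −y/λ), is a Killing vector of ĝ (conformal factor ψ ≡ 0). -/

import Mathlib

open Real

/-- Partial derivative of a scalar function on `ℝⁿ` with respect to the `c`-th coordinate. -/
noncomputable def pd {n : ℕ} (f : (Fin n → ℝ) → ℝ) (c : Fin n) (p : Fin n → ℝ) : ℝ :=
  fderiv ℝ f p (Pi.single c 1)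

/-- `X` is a conformal Killing vector of the metric `g` with conformal factor `ψ`:
for all indices `a b` and all points `p`,
`Σ_c [X^c ∂_c g_{ab} + g_{cb} ∂_a X^c + g_{ac} ∂_b X^c] = 2 ψ g_{ab}`. -/
def IsCKV {n : ℕ} (g : (Fin n → ℝ) → Matrix (Fin n) (Fin n) ℝ)
    (X : (Fin n → ℝ) → (Fin n → ℝ)) (ψ : (Fin n → ℝ) → ℝ) : Prop :=
  ∀ (a b : Fin n) (p : Fin n → ℝ),
    (∑ c, (X p c * pd (fun q => g q a b) c p
      + g p c b * pd (fun q => X q c) a p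
      + g p a c * pd (fun q => X q c) b p)) = 2 * ψ p * g p a b

lemma pd_exp_lin (a b : ℝ) (c : Fin 3) (p : Fin 3 → ℝ) :
    pd (fun q : Fin 3 → ℝ => Real.exp (a * q 0 + b * q 1)) c p
      = Real.exp (a * p 0 + b * p 1)
        * (a * (Pi.single c 1 : Fin 3 → ℝ) 0 + b * (Pi.single c 1 : Fin 3 → ℝ) 1) := by
  have h : HasFDerivAt (fun q : Fin 3 → ℝ => a * q 0 + b * q 1)
      (a • (ContinuousLinearMap.proj 0 : (Fin 3 → ℝ) →L[ℝ] ℝ)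
        + b • (ContinuousLinearMap.proj 1 : (Fin 3 → ℝ) →L[ℝ] ℝ)) p :=
    ((ContinuousLinearMap.proj (R := ℝ) (φ := fun _ : Fin 3 => ℝ) 0).hasFDerivAt.const_mul a).add
      ((ContinuousLinearMap.proj (R := ℝ) (φ := fun _ : Fin 3 => ℝ) 1).hasFDerivAt.const_mul b)
  have h2 := h.exp
  rw [pd, h2.fderiv]
  simp [mul_add]

lemma pd_neg_exp_lin (a b : ℝ) (c : Fin 3) (p : Fin 3 → ℝ) :
    pd (fun q : Fin 3 → ℝ => -Real.exp (a * q 0 + b * q 1)) c p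
      = -(Real.exp (a * p 0 + b * p 1)
        * (a * (Pi.single c 1 : Fin 3 → ℝ) 0 + b * (Pi.single c 1 : Fin 3 → ℝ) 1)) := by
  have : pd (fun q : Fin 3 → ℝ => -Real.exp (a * q 0 + b * q 1)) c p
      = -pd (fun q : Fin 3 → ℝ => Real.exp (a * q 0 + b * q 1)) c p := by
    unfold pd
    rw [fderiv_fun_neg]
    simp
  rw [this, pd_exp_lin]

lemma pd_const (r : ℝ) (c : Fin 3) (p : Fin 3 → ℝ) :
    pd (fun _ : Fin 3 → ℝ => r) c p = 0 := by
  unfold pd; simp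

lemma pd_neg_coord (lam : ℝ) (c : Fin 3) (p : Fin 3 → ℝ) :
    pd (fun q : Fin 3 → ℝ => -(q 2 / lam)) c p
      = -((Pi.single c 1 : Fin 3 → ℝ) 2 / lam) := by
  have heq : (fun q : Fin 3 → ℝ => -(q 2 / lam)) = fun q : Fin 3 → ℝ => (-(1 / lam)) * q 2 := by
    funext q; ring
  have h : HasFDerivAt (fun q : Fin 3 → ℝ => (-(1 / lam)) * q 2)
      ((-(1 / lam)) • (ContinuousLinearMap.proj 2 : (Fin 3 → ℝ) →L[ℝ] ℝ)) p :=
    (ContinuousLinearMap.proj (R := ℝ) (φ := fun _ : Fin 3 => ℝ)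
      (2 : Fin 3)).hasFDerivAt.const_mul (-(1 / lam))
  rw [pd, heq, h.fderiv]
  simp [div_eq_mul_inv, mul_comm]

/-- `Y₃ − (1/λ)Y₇ = (−2/(mλ), 1, −y/λ)` is a Killing vector of
`ĝ = diag(−e^{mλτ+2x}, e^{mλτ+2x}, e^{m(λ−1)τ+2x})`. -/
theorem Y3_minus_Y7_is_KV (m lam : ℝ) (hm : m ≠ 0) (hlam : lam ≠ 0) :
    IsCKV
      (fun p : Fin 3 → ℝ =>
        Matrix.diagonal
          ![-Real.exp (m * lam * p 0 + 2 * p 1),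
            Real.exp (m * lam * p 0 + 2 * p 1),
            Real.exp (m * (lam - 1) * p 0 + 2 * p 1)])
      (fun p : Fin 3 → ℝ => ![-(2 / (m * lam)), 1, -(p 2 / lam)])
      (fun _ => 0) := by
  intro a b p
  fin_cases a <;> fin_cases b <;>
    simp [Fin.sum_univ_three, Matrix.diagonal, pd_exp_lin, pd_neg_exp_lin, pd_const,
      pd_neg_coord, Matrix.cons_val_zero, Matrix.cons_val_one] <;>
    field_simp <;> ring
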